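/- Let λ = (λ_1,…,λ_m) be a partition of k and let t_λ = B_+(ℓ_{λ_1}ℓ_{λ_2}⋯ℓ_{λ_m}) be the rooted tree obtained by attaching the ladders ℓ_{λ_1},…,ℓ_{λ_m} to a new root. Let 𝔑 : ℚT → ℚT be the linear operator 𝔑(t) = ℓ_2 ∘ t, where ∘ is the Grossman–Larson product and ℓ_2 is the two-vertex ladder. Then the coefficient n(•; t_λ) of t_λ in 𝔑^k(•) equals (1/|Sym(t_λ)|)·k!/(λ_1!·λ_2!⋯λ_m!), the multinomial coefficient of λ divided by |Sym(t_λ)|. -/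

import Mathlib

/-! ### Planar rooted trees -/

/-- A planar rooted tree: a root with an ordered list of branches.
`PTree.node [T₁,…,T_k]` is `B₊(T₁⋯T_k)`; `PTree.node []` is the one-vertex tree `•`. -/
inductive PTree : Type where
  | node : List PTree → PTree

instance : Inhabited PTree := ⟨.node []⟩

noncomputable instance : DecidableEq PTree := Classical.decEq _

/-- Number of vertices of a planar rooted tree. -/
def PTree.size : PTree → ℕ
  | .node l => 1 + (l.attach.map (fun x => PTree.size x.1)).sum
decreasing_by
  have h := List.sizeOf_lt_of_mem x.2
  simp only [PTree.node.sizeOf_spec]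
  omega

/-! ### Rooted trees -/

/-- Isomorphism of the underlying rooted trees: the lists of branches agree
up to permutation and recursive isomorphism. -/
inductive PTree.Equiv : PTree → PTree → Prop where
  | node {l m m' : List PTree} :
      List.Forall₂ PTree.Equiv l m' → List.Perm m' m → PTree.Equiv (.node l) (.node m)

/-- Rooted trees: planar rooted trees modulo isomorphism. -/
def RTree : Type := Quot PTree.Equiv

/-- The underlying rooted tree of a planar rooted tree. -/
def toR : PTree → RTree := Quot.mk _

/-- A choice of planar representative of a rooted tree. -/
noncomputable def RTree.out : RTree → PTree := Quot.out

noncomputable instance : DecidableEq RTree := Classical.decEq _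

/-- The order of the symmetry group of (the underlying rooted tree of) a planar
rooted tree: `|Sym(B₊(t₁⋯t_k))| = (∏_s m_s!)·∏ᵢ |Sym(tᵢ)|`, where `m_s` is the
multiplicity of the isomorphism type `s` among the branches `t₁,…,t_k`. -/
noncomputable def PTree.symOrder : PTree → ℕ
  | .node l =>
      (l.attach.map (fun x => PTree.symOrder x.1)).prod *
      (((l.map toR : List RTree) : Multiset RTree).toFinset.prod
        (fun s => (Multiset.count s (l.map toR : Multiset RTree)).factorial))
decreasing_by
  have h := List.sizeOf_lt_of_mem x.2
  simp only [PTree.node.sizeOf_spec]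
  omega

/-- The order of the symmetry group of a rooted tree. -/
noncomputable def RTree.sym (t : RTree) : ℕ := t.out.symOrder

/-- Number of vertices of a rooted tree. -/
noncomputable def RTree.size (t : RTree) : ℕ := t.out.size

/-- `B₊` for rooted trees: attach a new root to a multiset forest. -/
noncomputable def RTree.node (m : Multiset RTree) : RTree :=
  toR (PTree.node (m.toList.map RTree.out))

/-- The one-vertex rooted tree `•`. -/
noncomputable def RTree.bullet : RTree := toR (.node [])

/-! ### The Grossman–Larson product -/

namespace PTree

mutual
/-- The list of vertices of a planar rooted tree, as paths from the root. -/
def positions : PTree → List (List ℕ)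
  | .node l => [] :: positionsList 0 l
/-- Vertices of the trees in a forest, as paths (first coordinate = index in forest). -/
def positionsList : ℕ → List PTree → List (List ℕ)
  | _, [] => []
  | i, t :: ts => (positions t).map (i :: ·) ++ positionsList (i+1) ts
end

/-- Attach the tree `s` by a new edge to the vertex of a tree at the given path
(as a new last child). -/
def attachAt (s : PTree) : PTree → List ℕ → PTree
  | .node l, [] => .node (l ++ [s])
  | .node l, i :: p => .node (l.set i (attachAt s l[i]! p))

/-- Attach several trees at given vertices, in order. -/
def attachMany : PTree → List (List ℕ × PTree) → PTree
  | t, [] => t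
  | t, (p, s) :: rest => attachMany (attachAt s t p) rest

end PTree

/-- Grossman–Larson product of planar representatives, with values in the free
`k`-module on rooted trees: for `t = B₊(t₁⋯t_n)` and a tree `t'` with `m`
vertices, the sum of the `m^n` rooted trees obtained by attaching each `tᵢ`
to a vertex of `t'`. -/
noncomputable def glMulP (k : Type*) [Semiring k] (t t' : PTree) : RTree →₀ k :=
  match t with
  | .node l =>
    (((List.replicate l.length (PTree.positions t')).sections).map
      (fun ps => Finsupp.single (toR (PTree.attachMany t' (ps.zip l))) (1 : k))).sum

/-- Grossman–Larson product of rooted trees. -/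
noncomputable def glMul (k : Type*) [Semiring k] (a b : RTree) : RTree →₀ k :=
  glMulP k a.out b.out

/-- Bilinear extension of the Grossman–Larson product to the free module `kT`. -/
noncomputable def glMulF {k : Type*} [CommSemiring k] (f g : RTree →₀ k) : RTree →₀ k :=
  f.sum (fun a x => g.sum (fun b y => (x * y) • glMul k a b))

/-- `ladderP n` is the unbranched planar rooted tree with `n + 1` vertices; the
ladder `ℓ_i` of the paper (with `i ≥ 1` vertices) is `ladderP (i - 1)`. -/
def ladderP : ℕ → PTree
  | 0 => .node []
  | n + 1 => .node [ladderP n]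

/-!
Write `t_ν` for the tree whose branches are ladders with `v + 1` vertices, `v ∈ ν`. Grafting a
leaf onto a tree produces some `t_ν` only if the tree is itself some `t_ρ` and the leaf goes on the
root or on top of a ladder; so the coefficient of `t_ν` in `ℓ₂ ∘ t_ρ` vanishes unless `ρ` is `ν`
with one ladder `v` shortened by a vertex. This gives a recursion for the coefficient of `t_ν` in
`𝔑^n(•)`, `n = ∑_{v ∈ ν} (v + 1)`, and `n! / (∏ (v + 1)! · ∏ mult!)` satisfies it: shortening `v`
contributes `(n - 1)! (v + 1) mult_ν(v) / (∏ (v + 1)! · ∏ mult!)`, and summing over the distinct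
parts, `∑_v (v + 1) mult_ν(v) = n`.
-/
theorem Multiset.eq_of_cons_erase_eq_cons_erase {α : Type*} [DecidableEq α] {s : Multiset α}
    {a b x y : α} (ha : a ∈ s) (hb : b ∈ s) (hxa : x ≠ a)
    (h : x ::ₘ s.erase a = y ::ₘ s.erase b) : x = y := by
  have h' : b ::ₘ x ::ₘ s = a ::ₘ y ::ₘ s := by
    conv_lhs => rw [← Multiset.cons_erase ha, Multiset.cons_swap x, ← Multiset.cons_swap a b, h,
      Multiset.cons_swap b y, Multiset.cons_erase hb]
  by_contra hxy
  have := congrArg (Multiset.count x) h'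
  rw [Multiset.count_cons, Multiset.count_cons_self, Multiset.count_cons_of_ne hxa,
    Multiset.count_cons_of_ne hxy] at this
  omega

theorem Multiset.sum_map_add_one (ν : Multiset ℕ) :
    (ν.map (· + 1)).sum = ν.sum + Multiset.card ν := by
  simp [Multiset.sum_map_add]

theorem Multiset.sum_toFinset_add_one_mul_count (ν : Multiset ℕ) :
    ∑ v ∈ ν.toFinset, (v + 1) * ν.count v = ν.sum + Multiset.card ν := by
  calc ∑ v ∈ ν.toFinset, (v + 1) * ν.count v
      = ∑ v ∈ ν.toFinset, ν.count v • (v + 1) :=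
        Finset.sum_congr rfl fun v _ => by rw [smul_eq_mul, mul_comm]
    _ = (ν.map (· + 1)).sum := (Finset.sum_multiset_map_count ν _).symm
    _ = ν.sum + Multiset.card ν := Multiset.sum_map_add_one ν

theorem Finsupp.list_sum_map_single_one_apply {α β R : Type*} [DecidableEq β]
    [AddMonoidWithOne R] (xs : List α) (f : α → β) (b : β) :
    (xs.map fun x => Finsupp.single (f x) (1 : R)).sum b = xs.countP (f · = b) := by
  induction xs with
  | nil => simp
  | cons x xs ih => simp [List.countP_cons, Finsupp.single_apply, ih, add_comm]

/-- The coefficient of `t_ν` in `ℓ₂ ∘ t_ρ`: the new leaf goes on the root or on top of a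
ladder. -/
def graftCoeff (ρ ν : Multiset ℕ) : ℕ :=
  (if 0 ::ₘ ρ = ν then 1 else 0) + ρ.countP fun w => (w + 1) ::ₘ ρ.erase w = ν

def shortenLadder : ℕ → Multiset ℕ → Multiset ℕ
  | 0, ν => ν.erase 0
  | u + 1, ν => u ::ₘ ν.erase (u + 1)

/-- The leaf graft onto `t_{shortenLadder v ν}` giving `t_ν` goes on the root if `v = 0`, and
otherwise on top of any of its `ν.count u + 1` ladders `u`, where `v = u + 1`. -/
def graftMultiplicity : ℕ → Multiset ℕ → ℕ
  | 0, _ => 1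
  | u + 1, ν => ν.count u + 1

theorem sum_add_card_shortenLadder {v : ℕ} {ν : Multiset ℕ} (hv : v ∈ ν) :
    (shortenLadder v ν).sum + Multiset.card (shortenLadder v ν) + 1 =
      ν.sum + Multiset.card ν := by
  obtain ⟨ρ, rfl⟩ := Multiset.exists_cons_of_mem hv
  cases v <;>
    simp only [shortenLadder, Multiset.erase_cons_head, Multiset.sum_cons, Multiset.card_cons] <;>
    omega

theorem shortenLadder_injOn (ν : Multiset ℕ) :
    Set.InjOn (shortenLadder · ν) {v | v ∈ ν} := by
  intro v hv v' hv' h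
  have hpos : 0 < Multiset.card ν := Multiset.card_pos_iff_exists_mem.mpr ⟨v, hv⟩
  have hcard := congrArg Multiset.card h
  rcases v with _ | u <;> rcases v' with _ | u' <;>
    simp only [shortenLadder, Multiset.card_cons, Multiset.card_erase_of_mem hv,
      Multiset.card_erase_of_mem hv'] at h hcard
  · rfl
  · omega
  · omega
  · rw [Multiset.eq_of_cons_erase_eq_cons_erase hv hv' (Nat.succ_ne_self u).symm h]

theorem exists_eq_shortenLadder_of_graftCoeff_ne_zero {ρ ν : Multiset ℕ}
    (h : graftCoeff ρ ν ≠ 0) :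
    ∃ v ∈ ν, ρ = shortenLadder v ν := by
  rw [graftCoeff] at h
  by_cases hroot : 0 ::ₘ ρ = ν
  · subst hroot
    exact ⟨0, Multiset.mem_cons_self _ _, by simp [shortenLadder]⟩
  · rw [if_neg hroot, zero_add, ← Nat.pos_iff_ne_zero, Multiset.countP_pos] at h
    obtain ⟨w, hw, rfl⟩ := h
    refine ⟨w + 1, Multiset.mem_cons_self _ _, ?_⟩
    simp [shortenLadder, Multiset.cons_erase hw]

theorem graftCoeff_shortenLadder {v : ℕ} {ν : Multiset ℕ} (hv : v ∈ ν) :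
    graftCoeff (shortenLadder v ν) ν = graftMultiplicity v ν := by
  obtain ⟨ρ, rfl⟩ := Multiset.exists_cons_of_mem hv
  rcases v with _ | u
  · have hbranch : ρ.countP (fun w => (w + 1) ::ₘ ρ.erase w = 0 ::ₘ ρ) = 0 :=
      Multiset.countP_eq_zero.mpr fun w hw h => by
        have hpos : 0 < Multiset.card ρ := Multiset.card_pos_iff_exists_mem.mpr ⟨w, hw⟩
        have := congrArg Multiset.card h
        simp only [Multiset.card_cons, Multiset.card_erase_of_mem hw, Nat.pred_eq_sub_one] at this
        omega
    simp [graftCoeff, shortenLadder, hbranch, graftMultiplicity]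
  · have hroot : 0 ::ₘ u ::ₘ ρ ≠ (u + 1) ::ₘ ρ := fun h => by
      simpa using congrArg Multiset.card h
    have hbranch :
        (u ::ₘ ρ).countP (fun w => (w + 1) ::ₘ (u ::ₘ ρ).erase w = (u + 1) ::ₘ ρ) =
          (u ::ₘ ρ).count u := by
      rw [Multiset.count]
      refine Multiset.countP_congr rfl fun w hw => propext ⟨fun h => ?_, ?_⟩
      · have h' : (w + 1) ::ₘ (u ::ₘ ρ).erase w = (u + 1) ::ₘ (u ::ₘ ρ).erase u := by
          rw [h, Multiset.erase_cons_head]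
        exact (Nat.succ_injective (Multiset.eq_of_cons_erase_eq_cons_erase hw
          (Multiset.mem_cons_self _ _) (Nat.succ_ne_self w) h')).symm
      · rintro rfl
        rw [Multiset.erase_cons_head]
    simp [graftCoeff, shortenLadder, hroot, hbranch, graftMultiplicity]

def countFactorialProd (ν : Multiset ℕ) : ℕ := ∏ v ∈ ν.toFinset, (ν.count v).factorial

def partFactorialProd (ν : Multiset ℕ) : ℕ := (ν.map fun v => (v + 1).factorial).prod

theorem partFactorialProd_cons (a : ℕ) (ν : Multiset ℕ) :
    partFactorialProd (a ::ₘ ν) = (a + 1).factorial * partFactorialProd ν := by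
  simp [partFactorialProd]

theorem countFactorialProd_eq_prod_of_subset {ν : Multiset ℕ} {s : Finset ℕ}
    (hs : ν.toFinset ⊆ s) : countFactorialProd ν = ∏ v ∈ s, (ν.count v).factorial :=
  Finset.prod_subset hs fun v _ hv => by
    rw [Multiset.count_eq_zero.mpr (by simpa using hv), Nat.factorial_zero]

theorem countFactorialProd_cons (a : ℕ) (ν : Multiset ℕ) :
    countFactorialProd (a ::ₘ ν) = (ν.count a + 1) * countFactorialProd ν := by
  have hsub : ν.toFinset ⊆ (a ::ₘ ν).toFinset := by simp [Finset.subset_insert]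
  have ha : a ∈ (a ::ₘ ν).toFinset := by simp
  rw [countFactorialProd_eq_prod_of_subset hsub, countFactorialProd,
    ← Finset.mul_prod_erase _ _ ha, ← Finset.mul_prod_erase _ _ ha, Multiset.count_cons_self,
    Nat.factorial_succ, mul_assoc]
  congr 2
  exact Finset.prod_congr rfl fun v hv => by
    rw [Multiset.count_cons_of_ne (Finset.ne_of_mem_erase hv)]

theorem partFactorialProd_pos (ν : Multiset ℕ) : 0 < partFactorialProd ν :=
  Multiset.prod_pos fun _ h => by
    obtain ⟨v, -, rfl⟩ := Multiset.mem_map.mp h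
    exact Nat.factorial_pos _

theorem countFactorialProd_pos (ν : Multiset ℕ) : 0 < countFactorialProd ν :=
  Finset.prod_pos fun _ _ => Nat.factorial_pos _

theorem partFactorialProd_mul_countFactorialProd_shortenLadder {v : ℕ} {ν : Multiset ℕ}
    (hv : v ∈ ν) :
    partFactorialProd (shortenLadder v ν) * countFactorialProd (shortenLadder v ν) *
        ((v + 1) * ν.count v) =
      partFactorialProd ν * countFactorialProd ν * graftMultiplicity v ν := by
  obtain ⟨ρ, rfl⟩ := Multiset.exists_cons_of_mem hv
  rcases v with _ | u
  · simp only [shortenLadder, Multiset.erase_cons_head, partFactorialProd_cons,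
      countFactorialProd_cons, Multiset.count_cons_self, graftMultiplicity]
    ring
  · simp only [shortenLadder, Multiset.erase_cons_head, partFactorialProd_cons, Nat.factorial_succ,
      countFactorialProd_cons, Multiset.count_cons_self, graftMultiplicity,
      Multiset.count_cons_of_ne (Nat.succ_ne_self u).symm]
    ring

theorem PTree.equiv_refl : ∀ t : PTree, t.Equiv t
  | .node l => .node (List.forall₂_same.mpr fun x _ => equiv_refl x) (List.Perm.refl l)

theorem toR_node_eq_of_perm {l l' : List PTree} (h : l.Perm l') :
    toR (.node l) = toR (.node l') :=
  Quot.sound (.node (List.forall₂_same.mpr fun x _ => PTree.equiv_refl x) h)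

theorem List.Forall₂.map_toR_eq {l m : List PTree} (h : List.Forall₂ PTree.Equiv l m) :
    l.map toR = m.map toR := by
  induction h with
  | nil => rfl
  | cons hab _ ih => rw [List.map_cons, List.map_cons, ih, toR, Quot.sound hab]

namespace RTree

def children : RTree → Multiset RTree :=
  Quot.lift (fun | .node l => (l.map toR : Multiset RTree)) fun
    | _, _, .node hl hp => by
      simp only [hl.map_toR_eq]
      exact Multiset.coe_eq_coe.mpr (hp.map toR)

theorem children_toR_node (l : List PTree) :
    (toR (.node l)).children = (l.map toR : Multiset RTree) :=
  rfl

end RTree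

theorem eq_ladderP_of_toR_eq {c : PTree} {n : ℕ} (h : toR c = toR (ladderP n)) :
    c = ladderP n := by
  induction n generalizing c with
  | zero =>
    obtain ⟨l⟩ := c
    obtain rfl : l = [] := by
      simpa [RTree.children_toR_node, ladderP] using congrArg RTree.children h
    rfl
  | succ n ih =>
    obtain ⟨l⟩ := c
    have := Multiset.coe_eq_coe.mp (congrArg RTree.children h)
    simp only [List.map_cons, List.map_nil, List.perm_singleton, List.map_eq_singleton_iff] at this
    obtain ⟨c, rfl, hc⟩ := this
    rw [ih hc]
    rfl

theorem ladderP_injective : Function.Injective ladderP := by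
  intro m n h
  induction m generalizing n with
  | zero => cases n <;> simp_all [ladderP]
  | succ m ih =>
    cases n with
    | zero => simp [ladderP] at h
    | succ n => simpa using ih (by simpa [ladderP] using h)

theorem toR_ladderP_injective : Function.Injective (toR ∘ ladderP) :=
  fun _ _ h => ladderP_injective (eq_ladderP_of_toR_eq h)

theorem out_toR_ladderP (n : ℕ) : (toR (ladderP n)).out = ladderP n :=
  eq_ladderP_of_toR_eq (Quot.out_eq _)

theorem exists_map_ladderP {l : List PTree} (h : ∀ x ∈ l, x ∈ Set.range ladderP) :
    ∃ ns : List ℕ, ns.map ladderP = l := by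
  rwa [← Set.mem_range, Set.range_list_map]

theorem symOrder_ladderP (n : ℕ) : (ladderP n).symOrder = 1 := by
  induction n with
  | zero => simp [ladderP, PTree.symOrder]
  | succ n ih => simp [ladderP, PTree.symOrder, ih]

/-- `ladderBouquet ν` is the tree `t_λ` for the partition `λ = ν + 1`: a part `v ∈ ν` stands
for the ladder `ladderP v` with `v + 1` vertices. -/
def ladderBouquet (ν : Multiset ℕ) : RTree :=
  Quot.liftOn ν (fun l => toR (.node (l.map ladderP))) fun _ _ h => toR_node_eq_of_perm (h.map _)

theorem ladderBouquet_coe (l : List ℕ) : ladderBouquet l = toR (.node (l.map ladderP)) := rfl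

theorem children_ladderBouquet (ν : Multiset ℕ) :
    (ladderBouquet ν).children = ν.map (toR ∘ ladderP) := by
  induction ν using Quot.ind
  simp [ladderBouquet_coe, RTree.children_toR_node]

theorem ladderBouquet_injective : Function.Injective ladderBouquet := fun _ _ h =>
  Multiset.map_injective toR_ladderP_injective <| by
    rw [← children_ladderBouquet, ← children_ladderBouquet, h]

theorem toR_eq_ladderBouquet_iff {s : PTree} {ν : Multiset ℕ} :
    toR s = ladderBouquet ν ↔
      ∃ l : List ℕ, s = .node (l.map ladderP) ∧ (l : Multiset ℕ) = ν := by
  refine ⟨fun h => ?_, fun ⟨l, hs, hl⟩ => by rw [hs, ← hl, ladderBouquet_coe]⟩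
  obtain ⟨m⟩ := s
  have hm : (m.map toR : Multiset RTree) = ν.map (toR ∘ ladderP) := by
    rw [← RTree.children_toR_node, h, children_ladderBouquet]
  obtain ⟨l, rfl⟩ : ∃ l : List ℕ, l.map ladderP = m := by
    refine exists_map_ladderP fun x hx => ?_
    have : toR x ∈ ν.map (toR ∘ ladderP) :=
      hm ▸ Multiset.mem_coe.mpr (List.mem_map_of_mem hx)
    obtain ⟨n, -, hn⟩ := Multiset.mem_map.mp this
    exact ⟨n, (eq_ladderP_of_toR_eq hn.symm).symm⟩
  exact ⟨l, rfl, ladderBouquet_injective h.symm |>.symm⟩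

theorem exists_out_ladderBouquet (ν : Multiset ℕ) :
    ∃ l : List ℕ, (ladderBouquet ν).out = .node (l.map ladderP) ∧ (l : Multiset ℕ) = ν :=
  toR_eq_ladderBouquet_iff.mp (Quot.out_eq _)

theorem sym_ladderBouquet (ν : Multiset ℕ) : (ladderBouquet ν).sym = countFactorialProd ν := by
  obtain ⟨l, hout, rfl⟩ := exists_out_ladderBouquet ν
  have hbranches : ((l.map ladderP).attach.map fun x => x.1.symOrder).prod = 1 :=
    List.prod_eq_one fun x hx => by
      obtain ⟨⟨_, hy⟩, -, rfl⟩ := List.mem_map.mp hx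
      obtain ⟨n, -, rfl⟩ := List.mem_map.mp hy
      exact symOrder_ladderP n
  rw [RTree.sym, hout, PTree.symOrder, hbranches, one_mul, List.map_map, ← Multiset.map_coe,
    Multiset.toFinset_map, Finset.prod_image fun _ _ _ _ h => toR_ladderP_injective h,
    countFactorialProd]
  refine Finset.prod_congr rfl fun v _ => ?_
  rw [Multiset.count_map_eq_count' _ _ toR_ladderP_injective]

namespace PTree

theorem mem_positionsList {p : List ℕ} {j : ℕ} {l : List PTree} (h : p ∈ positionsList j l) :
    ∃ i < l.length, ∃ q ∈ l[i]!.positions, p = (j + i) :: q := by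
  induction l generalizing j with
  | nil => simp [positionsList] at h
  | cons t ts ih =>
    rw [positionsList, List.mem_append, List.mem_map] at h
    rcases h with ⟨q, hq, rfl⟩ | h
    · exact ⟨0, by simp, q, by simpa using hq, rfl⟩
    · obtain ⟨i, hi, q, hq, rfl⟩ := ih h
      exact ⟨i + 1, by simpa using hi, q, by simpa using hq, by
        rw [Nat.add_right_comm, Nat.add_assoc]⟩

theorem mem_positions_node {p : List ℕ} {l : List PTree} (h : p ∈ (node l).positions) :
    p = [] ∨ ∃ i < l.length, ∃ q ∈ l[i]!.positions, p = i :: q := by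
  rw [positions, List.mem_cons] at h
  exact h.imp_right fun h => by simpa using mem_positionsList h

theorem positions_ladderP (n : ℕ) :
    (ladderP n).positions = (List.range (n + 1)).map (List.replicate · 0) := by
  induction n with
  | zero => simp [ladderP, positions, positionsList]
  | succ n ih =>
    rw [ladderP, positions, positionsList, positionsList, ih]
    conv_rhs => rw [List.range_succ_eq_map]
    simp [Function.comp_def, List.replicate_succ]

theorem attachAt_ladderP_top (n : ℕ) :
    attachAt (node []) (ladderP n) (List.replicate n 0) = ladderP (n + 1) := by
  induction n with
  | zero => rfl
  | succ n ih => simp [ladderP, attachAt, List.replicate_succ, ih]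

theorem eq_of_attachAt_eq_ladderP {c : PTree} {q : List ℕ} {v : ℕ} (hq : q ∈ c.positions)
    (h : attachAt (node []) c q = ladderP v) :
    ∃ u, v = u + 1 ∧ c = ladderP u ∧ q = List.replicate u 0 := by
  induction q generalizing c v with
  | nil =>
    obtain ⟨l⟩ := c
    cases v with
    | zero => simp [attachAt, ladderP] at h
    | succ u =>
      obtain ⟨rfl, hu⟩ : l = [] ∧ node [] = ladderP u :=
        List.append_singleton_inj.mp (by simpa [attachAt, ladderP] using h)
      obtain rfl : u = 0 := ladderP_injective hu.symm
      exact ⟨0, rfl, rfl, rfl⟩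
  | cons i q ih =>
    obtain ⟨l⟩ := c
    obtain ⟨i, hi, q, hq, hiq⟩ := (mem_positions_node hq).resolve_left (List.cons_ne_nil _ _)
    obtain ⟨rfl, rfl⟩ := List.cons_eq_cons.mp hiq
    rw [attachAt] at h
    cases v with
    | zero =>
      have := congrArg List.length (node.inj h)
      simp only [List.length_set] at this
      simp [this] at hi
    | succ u =>
      obtain ⟨c₀, rfl⟩ : ∃ c₀, l = [c₀] :=
        List.length_eq_one_iff.mp (by simpa [ladderP] using congrArg List.length (node.inj h))
      obtain rfl : i = 0 := by simpa using hi
      obtain ⟨u, rfl, rfl, rfl⟩ := ih (by simpa using hq) (by simpa [ladderP] using h)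
      exact ⟨u + 1, rfl, rfl, rfl⟩

theorem attachAt_ladderP_ne_ladderP {j w : ℕ} (hj : j < w) (u : ℕ) :
    attachAt (node []) (ladderP w) (List.replicate j 0) ≠ ladderP u := fun h => by
  have hmem : List.replicate j 0 ∈ (ladderP w).positions := by
    simp only [positions_ladderP, List.mem_map, List.mem_range]
    exact ⟨j, by omega, rfl⟩
  obtain ⟨u, -, hw, hj'⟩ := eq_of_attachAt_eq_ladderP hmem h
  have := congrArg List.length hj'
  rw [List.length_replicate, List.length_replicate] at this
  exact hj.ne (this.trans (ladderP_injective hw).symm)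

end PTree

open PTree

noncomputable def leafGraftCount (s : PTree) (ν : Multiset ℕ) : ℕ :=
  s.positions.countP fun p => toR (attachAt (node []) s p) = ladderBouquet ν

theorem toR_node_append_cons_eq_ladderBouquet_iff {pre tail : List ℕ} {X : PTree}
    {ν : Multiset ℕ} :
    toR (node (pre.map ladderP ++ X :: tail.map ladderP)) = ladderBouquet ν ↔
      ∃ u, X = ladderP u ∧ u ::ₘ ((pre ++ tail : List ℕ) : Multiset ℕ) = ν := by
  rw [toR_eq_ladderBouquet_iff]
  constructor
  · rintro ⟨m, hm, rfl⟩
    have hm := node.inj hm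
    obtain ⟨u, -, rfl⟩ := List.mem_map.mp (hm ▸ List.mem_append_right _ List.mem_cons_self)
    refine ⟨u, rfl, ?_⟩
    rw [show m = pre ++ u :: tail from
      List.map_injective_iff.mpr ladderP_injective (by simp [← hm])]
    exact (Multiset.coe_eq_coe.mpr List.perm_middle).symm
  · rintro ⟨u, rfl, rfl⟩
    exact ⟨pre ++ u :: tail, by simp, Multiset.coe_eq_coe.mpr List.perm_middle⟩

theorem attachAt_node_append_cons (s t : PTree) (pre tail : List PTree) (q : List ℕ) :
    attachAt s (node (pre ++ t :: tail)) (pre.length :: q) =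
      node (pre ++ attachAt s t q :: tail) := by
  simp [attachAt, List.set_append_right]

theorem countP_graft_onto_ladderP (pre tail : List ℕ) (w : ℕ) (ν : Multiset ℕ) :
    ((ladderP w).positions.map (pre.length :: ·)).countP (fun p =>
        toR (attachAt (node []) (node (pre.map ladderP ++ ladderP w :: tail.map ladderP)) p) =
          ladderBouquet ν) =
      if (w + 1) ::ₘ ((pre ++ tail : List ℕ) : Multiset ℕ) = ν then 1 else 0 := by
  have hgraft (q : List ℕ) :
      toR (attachAt (node []) (node (pre.map ladderP ++ ladderP w :: tail.map ladderP))
          (pre.length :: q)) = ladderBouquet ν ↔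
        ∃ u, attachAt (node []) (ladderP w) q = ladderP u ∧
          u ::ₘ ((pre ++ tail : List ℕ) : Multiset ℕ) = ν := by
    rw [← List.length_map (f := ladderP), attachAt_node_append_cons,
      toR_node_append_cons_eq_ladderBouquet_iff]
  have hbelow : ∀ p ∈ ((List.range w).map (List.replicate · 0)).map (pre.length :: ·),
      ¬ toR (attachAt (node []) (node (pre.map ladderP ++ ladderP w :: tail.map ladderP)) p) =
        ladderBouquet ν := by
    simp only [List.map_map, List.mem_map, List.mem_range, Function.comp_apply]
    rintro _ ⟨j, hj, rfl⟩ hgraft'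
    obtain ⟨u, hu, -⟩ := (hgraft _).mp hgraft'
    exact attachAt_ladderP_ne_ladderP hj u hu
  rw [positions_ladderP, List.range_succ, List.map_append (f := (List.replicate · 0)),
    List.map_append (f := (pre.length :: ·)), List.countP_append,
    List.countP_eq_zero.mpr (by simpa using hbelow), zero_add]
  simp only [List.map_cons, List.map_nil, List.countP_singleton, decide_eq_true_eq, hgraft,
    attachAt_ladderP_top, ladderP_injective.eq_iff, exists_eq_left']

theorem countP_positionsList_ladders (ν : Multiset ℕ) : ∀ suf pre : List ℕ,
    (positionsList pre.length (suf.map ladderP)).countP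
        (fun p => toR (attachAt (node []) (node ((pre ++ suf).map ladderP)) p) = ladderBouquet ν) =
      suf.countP fun w => (w + 1) ::ₘ ((pre ++ suf : List ℕ) : Multiset ℕ).erase w = ν
  | [], _ => by simp [positionsList]
  | w :: tail, pre => by
    have ih := countP_positionsList_ladders ν tail (pre ++ [w])
    simp only [List.length_append, List.length_singleton, List.append_assoc, List.singleton_append]
      at ih
    have herase :
        ((pre ++ w :: tail : List ℕ) : Multiset ℕ).erase w = (pre ++ tail : List ℕ) := by
      rw [Multiset.coe_eq_coe.mpr List.perm_middle, ← Multiset.cons_coe, Multiset.erase_cons_head]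
    rw [List.map_cons, positionsList, List.countP_append, ih, List.countP_cons,
      List.map_append, List.map_cons, countP_graft_onto_ladderP, herase, add_comm]
    simp only [decide_eq_true_eq]

theorem leafGraftCount_node_map_ladderP (l : List ℕ) (ν : Multiset ℕ) :
    leafGraftCount (node (l.map ladderP)) ν = graftCoeff l ν := by
  have hroot : attachAt (node []) (node (l.map ladderP)) [] = node ((l ++ [0]).map ladderP) := by
    simp [attachAt, ladderP]
  have hbranch := countP_positionsList_ladders ν l []
  rw [List.length_nil, List.nil_append] at hbranch
  rw [leafGraftCount, positions, List.countP_cons, hbranch, hroot, ← ladderBouquet_coe,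
    graftCoeff, Multiset.coe_countP, add_comm]
  simp only [decide_eq_true_eq, ladderBouquet_injective.eq_iff,
    Multiset.coe_eq_coe.mpr (List.perm_append_singleton _ _), Multiset.cons_coe]
  congr

theorem mem_range_ladderP_of_toR_node_eq {l : List PTree} {ν : Multiset ℕ}
    (h : toR (node l) = ladderBouquet ν) : ∀ x ∈ l, x ∈ Set.range ladderP := by
  obtain ⟨k, hk, -⟩ := toR_eq_ladderBouquet_iff.mp h
  intro x hx
  obtain ⟨n, -, rfl⟩ := List.mem_map.mp (node.inj hk ▸ hx)
  exact ⟨n, rfl⟩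

theorem exists_eq_node_map_ladderP_of_leafGraftCount_ne_zero {s : PTree} {ν : Multiset ℕ}
    (h : leafGraftCount s ν ≠ 0) : ∃ l : List ℕ, s = node (l.map ladderP) := by
  obtain ⟨p, hp, hgraft⟩ := List.countP_pos_iff.mp (Nat.pos_of_ne_zero h)
  obtain ⟨m⟩ := s
  rw [decide_eq_true_eq] at hgraft
  suffices hm : ∀ x ∈ m, x ∈ Set.range ladderP by
    obtain ⟨l, rfl⟩ := exists_map_ladderP hm
    exact ⟨l, rfl⟩
  rcases mem_positions_node hp with rfl | ⟨i, hi, q, hq, rfl⟩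
  · exact fun x hx => mem_range_ladderP_of_toR_node_eq hgraft x (List.mem_append_left _ hx)
  · rw [attachAt] at hgraft
    have hset := mem_range_ladderP_of_toR_node_eq hgraft
    obtain ⟨u, hu⟩ := hset _ (List.mem_set hi _)
    obtain ⟨u, -, hmi, -⟩ := eq_of_attachAt_eq_ladderP hq hu.symm
    intro x hx
    have hm : m = (m.set i (attachAt (node []) m[i]! q)).set i m[i] := by simp
    rw [hm] at hx
    rcases List.mem_or_eq_of_mem_set hx with hx | rfl
    · exact hset x hx
    · exact ⟨u, by rw [← getElem!_pos m i hi, hmi]⟩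

theorem glMul_ladderP_one_apply_eq_leafGraftCount (b : RTree) (ν : Multiset ℕ) :
    glMul ℚ (toR (ladderP 1)) b (ladderBouquet ν) = leafGraftCount b.out ν := by
  rw [glMul, out_toR_ladderP, ladderP, ladderP, glMulP]
  simp [List.sections, List.map_map, Function.comp_def, attachMany, leafGraftCount,
    Finsupp.list_sum_map_single_one_apply]

theorem glMul_ladderP_one_ladderBouquet_apply_eq_graftCoeff (ρ ν : Multiset ℕ) :
    glMul ℚ (toR (ladderP 1)) (ladderBouquet ρ) (ladderBouquet ν) = graftCoeff ρ ν := by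
  obtain ⟨l, hout, rfl⟩ := exists_out_ladderBouquet ρ
  rw [glMul_ladderP_one_apply_eq_leafGraftCount, hout, leafGraftCount_node_map_ladderP]

theorem exists_eq_ladderBouquet_shortenLadder_of_glMul_ne_zero {b : RTree} {ν : Multiset ℕ}
    (h : glMul ℚ (toR (ladderP 1)) b (ladderBouquet ν) ≠ 0) :
    ∃ v ∈ ν, b = ladderBouquet (shortenLadder v ν) := by
  rw [glMul_ladderP_one_apply_eq_leafGraftCount, Nat.cast_ne_zero] at h
  obtain ⟨l, hl⟩ := exists_eq_node_map_ladderP_of_leafGraftCount_ne_zero h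
  rw [hl, leafGraftCount_node_map_ladderP] at h
  obtain ⟨v, hv, hlv⟩ := exists_eq_shortenLadder_of_graftCoeff_ne_zero h
  refine ⟨v, hv, ?_⟩
  rw [← hlv, ladderBouquet_coe, ← hl]
  exact (Quot.out_eq b).symm

theorem glMulF_ladderP_one_apply_ladderBouquet (f : RTree →₀ ℚ) (ν : Multiset ℕ) :
    glMulF (Finsupp.single (toR (ladderP 1)) 1) f (ladderBouquet ν) =
      ∑ v ∈ ν.toFinset, f (ladderBouquet (shortenLadder v ν)) * graftMultiplicity v ν := by
  set g : RTree → ℚ := fun b => f b * glMul ℚ (toR (ladderP 1)) b (ladderBouquet ν)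
  set S := ν.toFinset.image fun v => ladderBouquet (shortenLadder v ν)
  have hsupp : ∀ b ∉ S, g b = 0 := fun b hb => by
    by_contra hne
    obtain ⟨v, hv, rfl⟩ :=
      exists_eq_ladderBouquet_shortenLadder_of_glMul_ne_zero (right_ne_zero_of_mul hne)
    exact hb (Finset.mem_image_of_mem _ (Multiset.mem_toFinset.mpr hv))
  have hinj : Set.InjOn (fun v => ladderBouquet (shortenLadder v ν)) ν.toFinset :=
    ladderBouquet_injective.comp_injOn fun v hv v' hv' =>
      shortenLadder_injOn ν (Multiset.mem_toFinset.mp hv) (Multiset.mem_toFinset.mp hv')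
  calc glMulF (Finsupp.single (toR (ladderP 1)) 1) f (ladderBouquet ν)
      = ∑ b ∈ f.support, g b := by
        rw [glMulF, Finsupp.sum_single_index (by simp), Finsupp.sum_apply, Finsupp.sum]
        simp [g]
    _ = ∑ b ∈ S, g b := Finset.sum_congr_of_eq_on_inter (fun b _ hb => hsupp b hb)
        (fun b _ hb => by simp [g, Finsupp.notMem_support_iff.mp hb]) fun _ _ _ => rfl
    _ = _ := by
      rw [Finset.sum_image hinj]
      refine Finset.sum_congr rfl fun v hv => ?_
      simp only [g, glMul_ladderP_one_ladderBouquet_apply_eq_graftCoeff,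
        graftCoeff_shortenLadder (Multiset.mem_toFinset.mp hv)]

theorem iterate_glMulF_ladderP_one_apply_ladderBouquet (k : ℕ) (ν : Multiset ℕ)
    (hk : ν.sum + Multiset.card ν = k) :
    ((glMulF (Finsupp.single (toR (ladderP 1)) (1 : ℚ)))^[k] (Finsupp.single RTree.bullet 1))
        (ladderBouquet ν) =
      k.factorial / (partFactorialProd ν * countFactorialProd ν) := by
  induction k generalizing ν with
  | zero =>
    obtain rfl : ν = 0 := Multiset.card_eq_zero.mp (by omega)
    have hbullet : ladderBouquet 0 = RTree.bullet := rfl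
    simp [hbullet, countFactorialProd, partFactorialProd]
  | succ k ih =>
    have hden (ρ : Multiset ℕ) : (partFactorialProd ρ * countFactorialProd ρ : ℚ) ≠ 0 := by
      have := partFactorialProd_pos ρ
      have := countFactorialProd_pos ρ
      positivity
    have hterm : ∀ v ∈ ν.toFinset,
        ((glMulF (Finsupp.single (toR (ladderP 1)) (1 : ℚ)))^[k] (Finsupp.single RTree.bullet 1))
            (ladderBouquet (shortenLadder v ν)) * graftMultiplicity v ν =
          k.factorial * ((v + 1) * ν.count v : ℕ) /
            (partFactorialProd ν * countFactorialProd ν) := by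
      intro v hv
      have hv := Multiset.mem_toFinset.mp hv
      have hkey : (partFactorialProd (shortenLadder v ν) *
          countFactorialProd (shortenLadder v ν) * ((v + 1) * ν.count v) : ℚ) =
            partFactorialProd ν * countFactorialProd ν * graftMultiplicity v ν := by
        exact_mod_cast partFactorialProd_mul_countFactorialProd_shortenLadder hv
      rw [ih _ (by have := sum_add_card_shortenLadder hv; omega), div_mul_eq_mul_div,
        div_eq_div_iff (hden _) (hden _)]
      push_cast
      linear_combination (k.factorial : ℚ) * hkey.symm
    rw [Function.iterate_succ_apply', glMulF_ladderP_one_apply_ladderBouquet,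
      Finset.sum_congr rfl hterm, ← Finset.sum_div, ← Finset.mul_sum, ← Nat.cast_sum,
      Multiset.sum_toFinset_add_one_mul_count, hk, Nat.factorial_succ]
    push_cast
    ring

/-- Let `λ = (λ₁,…,λ_m)` be a partition of `k` (a list of
positive integers with sum `k`) and let `t_λ = B₊(ℓ_{λ₁}⋯ℓ_{λ_m})`.  The
coefficient `n(•; t_λ)` of `t_λ` in `𝔑^k(•)`, where `𝔑(t) = ℓ₂ ∘ t`, equals
`(1/|Sym(t_λ)|)·k!/(λ₁!⋯λ_m!)`. -/
theorem growth_operator_coefficient (k : ℕ) (lam : List ℕ)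
    (hpos : ∀ i ∈ lam, 1 ≤ i) (hsum : lam.sum = k) :
    ((fun f => glMulF (Finsupp.single (toR (ladderP 1)) (1 : ℚ)) f)^[k]
        (Finsupp.single RTree.bullet 1))
      (toR (PTree.node (lam.map (fun i => ladderP (i - 1)))))
      = ((RTree.sym (toR (PTree.node (lam.map (fun i => ladderP (i - 1))))) : ℚ))⁻¹
          * (k.factorial : ℚ) / ((lam.map Nat.factorial).prod : ℚ) := by
  set ν : Multiset ℕ := ((lam.map (· - 1) : List ℕ) : Multiset ℕ)
  have htree : toR (node (lam.map fun i => ladderP (i - 1))) = ladderBouquet ν := by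
    rw [ladderBouquet_coe, List.map_map]
    rfl
  have hparts_succ : ν.map (· + 1) = (lam : Multiset ℕ) := by
    simp only [ν, Multiset.map_coe, List.map_map]
    congr 1
    conv_rhs => rw [← List.map_id lam]
    exact List.map_congr_left fun i hi => Nat.sub_add_cancel (hpos i hi)
  have hparts : partFactorialProd ν = (lam.map Nat.factorial).prod := by
    rw [partFactorialProd, ← Function.comp_def Nat.factorial (· + 1), ← Multiset.map_map,
      hparts_succ, Multiset.map_coe, Multiset.prod_coe]
  have hk : ν.sum + Multiset.card ν = k := by
    rw [← Multiset.sum_map_add_one, hparts_succ, Multiset.sum_coe, hsum]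
  rw [htree, iterate_glMulF_ladderP_one_apply_ladderBouquet k ν hk, sym_ladderBouquet, ← hparts]
  ring
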